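/- Let $V$ be a Hilbert space, $s_1<s_2$, and $\rho$ a nonzero finite positive measure on $[s_1,s_2]$. Then for every $v \in H^1((s_1,s_2),V)$ (with continuous representative), $\sup_{\lambda\in[s_1,s_2]}\|v(\lambda)\|_V \le M\left(\int_{[s_1,s_2]}\|v(s)\|_V^2\,d\rho(s) + \int_{s_1}^{s_2}\|\partial_\lambda v(s)\|_V^2\,ds\right)^{1/2}$, where $M = \sqrt{2}\max\left(\frac{1}{\sqrt{|\rho|}},\sqrt{s_2-s_1}\right)$ and $|\rho| = \rho([s_1,s_2])$. -/

import Mathlib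

/-!
From `v t = v s + ∫ s..t v'` and Cauchy–Schwarz on `[s₁, s₂]`,
`‖v λ‖² ≤ 2 ‖v s‖² + 2 (s₂ - s₁) ∫ ‖v'‖²` for every `s`. Integrating this in `s` against `ρ`
and dividing by `|ρ|` bounds `‖v λ‖²` by `2 (∫ ‖v‖² dρ / |ρ| + (s₂ - s₁) ∫ ‖v'‖²)`, and both
coefficients are at most `max (1 / |ρ|) (s₂ - s₁)`.
-/

open MeasureTheory intervalIntegral

theorem sq_integral_le_measureReal_mul_integral_sq {α : Type*} [MeasurableSpace α]
    {μ : Measure α} [IsFiniteMeasure μ] {f : α → ℝ} (hf : Integrable f μ)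
    (hf2 : Integrable (fun x => f x ^ 2) μ) :
    (∫ x, f x ∂μ) ^ 2 ≤ μ.real Set.univ * ∫ x, f x ^ 2 ∂μ := by
  rcases eq_zero_or_neZero μ with rfl | _
  · simp
  have jensen : (⨍ x, f x ∂μ) ^ 2 ≤ ⨍ x, f x ^ 2 ∂μ :=
    even_two.convexOn_pow.map_average_le (continuous_pow 2).continuousOn isClosed_univ
      (ae_of_all _ fun x => Set.mem_univ _) hf hf2
  set m := μ.real Set.univ
  have hm : m ≠ 0 := measureReal_univ_ne_zero
  rw [average_eq, average_eq, smul_eq_mul, smul_eq_mul] at jensen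
  calc (∫ x, f x ∂μ) ^ 2 = m ^ 2 * (m⁻¹ * ∫ x, f x ∂μ) ^ 2 := by field_simp
    _ ≤ m ^ 2 * (m⁻¹ * ∫ x, f x ^ 2 ∂μ) := by gcongr
    _ = m * ∫ x, f x ^ 2 ∂μ := by field_simp

theorem sq_intervalIntegral_le_mul_intervalIntegral_sq {f : ℝ → ℝ} {a b : ℝ} (hab : a ≤ b)
    (hf : IntervalIntegrable f volume a b)
    (hf2 : IntervalIntegrable (fun x => f x ^ 2) volume a b) :
    (∫ x in a..b, f x) ^ 2 ≤ (b - a) * ∫ x in a..b, f x ^ 2 := by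
  simpa [integral_of_le hab, hab] using sq_integral_le_measureReal_mul_integral_sq hf.1 hf2.1

section Increments

variable {E : Type*} [NormedAddCommGroup E] [NormedSpace ℝ E] {v v' : ℝ → E} {a b s t : ℝ}

theorem norm_le_norm_add_intervalIntegral_norm (hv' : IntervalIntegrable v' volume a b)
    (hs : s ∈ Set.Icc a b) (ht : t ∈ Set.Icc a b) (hftc : v t = v s + ∫ u in s..t, v' u) :
    ‖v t‖ ≤ ‖v s‖ + ∫ u in a..b, ‖v' u‖ := by
  have hab : a ≤ b := hs.1.trans hs.2
  have hsub : Set.uIoc s t ⊆ Set.uIoc a b := Set.uIoc_subset_uIoc_of_uIcc_subset_uIcc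
    (Set.uIcc_subset_uIcc (Set.mem_uIcc_of_le hs.1 hs.2) (Set.mem_uIcc_of_le ht.1 ht.2))
  calc ‖v t‖ ≤ ‖v s‖ + ‖∫ u in s..t, v' u‖ := hftc ▸ norm_add_le _ _
    _ ≤ ‖v s‖ + |∫ u in s..t, ‖v' u‖| := by grw [norm_integral_le_abs_integral_norm]
    _ ≤ ‖v s‖ + |∫ u in a..b, ‖v' u‖| := by
      grw [abs_integral_mono_interval hsub (ae_of_all _ fun u => norm_nonneg _) hv'.norm]
    _ = ‖v s‖ + ∫ u in a..b, ‖v' u‖ := by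
      rw [abs_of_nonneg (integral_nonneg hab fun u _ => norm_nonneg _)]

theorem sq_norm_le_two_mul_sq_norm_add (hv' : IntervalIntegrable v' volume a b)
    (hv'2 : IntervalIntegrable (fun u => ‖v' u‖ ^ 2) volume a b)
    (hs : s ∈ Set.Icc a b) (ht : t ∈ Set.Icc a b) (hftc : v t = v s + ∫ u in s..t, v' u) :
    ‖v t‖ ^ 2 ≤ 2 * ‖v s‖ ^ 2 + 2 * ((b - a) * ∫ u in a..b, ‖v' u‖ ^ 2) := by
  have hcs := sq_intervalIntegral_le_mul_intervalIntegral_sq (hs.1.trans hs.2) hv'.norm hv'2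
  calc ‖v t‖ ^ 2 ≤ (‖v s‖ + ∫ u in a..b, ‖v' u‖) ^ 2 := by
        grw [norm_le_norm_add_intervalIntegral_norm hv' hs ht hftc]
    _ ≤ 2 * (‖v s‖ ^ 2 + (∫ u in a..b, ‖v' u‖) ^ 2) := add_sq_le
    _ ≤ 2 * ‖v s‖ ^ 2 + 2 * ((b - a) * ∫ u in a..b, ‖v' u‖ ^ 2) := by linarith

end Increments

theorem le_sqrt_two_mul_max_mul_sqrt_of_sq_mul_le {x r d A B : ℝ} (hx : 0 ≤ x) (hr : 0 < r)
    (hA : 0 ≤ A) (hB : 0 ≤ B) (h : x ^ 2 * r ≤ 2 * A + r * (2 * (d * B))) :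
    x ≤ √2 * max (1 / √r) (√d) * √(A + B) := by
  have hx2 : x ^ 2 ≤ 2 * max (1 / r) d * (A + B) := by
    have hdiv : x ^ 2 ≤ 2 * (1 / r * A) + 2 * (d * B) := by
      rw [← le_div_iff₀ hr] at h
      exact h.trans_eq (by field_simp)
    calc x ^ 2 ≤ 2 * (1 / r * A) + 2 * (d * B) := hdiv
      _ ≤ 2 * (max (1 / r) d * A) + 2 * (max (1 / r) d * B) := by
        gcongr
        exacts [le_max_left _ _, le_max_right _ _]
      _ = 2 * max (1 / r) d * (A + B) := by ring
  have hsqrt_max : √(max (1 / r) d) = max (1 / √r) (√d) := by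
    rw [one_div, one_div, ← Real.sqrt_inv]
    exact Monotone.map_max fun _ _ => Real.sqrt_le_sqrt
  calc x = √(x ^ 2) := (Real.sqrt_sq hx).symm
    _ ≤ √(2 * max (1 / r) d * (A + B)) := Real.sqrt_le_sqrt hx2
    _ = √2 * max (1 / √r) (√d) * √(A + B) := by
      rw [Real.sqrt_mul (by positivity), Real.sqrt_mul zero_le_two, hsqrt_max]

theorem stmt4_general {V : Type*} [NormedAddCommGroup V] [InnerProductSpace ℝ V]
    (s₁ s₂ : ℝ) (ρ : Measure ℝ) [IsFiniteMeasure ρ]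
    (hρpos : 0 < ρ (Set.Icc s₁ s₂))
    (v v' : ℝ → V) (hc : Continuous v)
    (hv'int : IntervalIntegrable v' volume s₁ s₂)
    (hv'2 : IntervalIntegrable (fun s => ‖v' s‖ ^ 2) volume s₁ s₂)
    (hftc : ∀ a ∈ Set.Icc s₁ s₂, ∀ b ∈ Set.Icc s₁ s₂, v b = v a + ∫ s in a..b, v' s)
    (lam : ℝ) (hlam : lam ∈ Set.Icc s₁ s₂) :
    ‖v lam‖ ≤ Real.sqrt 2 * max (1 / Real.sqrt (ρ (Set.Icc s₁ s₂)).toReal) (Real.sqrt (s₂ - s₁)) *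
      Real.sqrt ((∫ s in Set.Icc s₁ s₂, ‖v s‖ ^ 2 ∂ρ) + ∫ s in s₁..s₂, ‖v' s‖ ^ 2) := by
  have hle : s₁ ≤ s₂ := hlam.1.trans hlam.2
  have hv2 : IntegrableOn (fun s => ‖v s‖ ^ 2) (Set.Icc s₁ s₂) ρ :=
    (hc.norm.pow 2).continuousOn.integrableOn_compact isCompact_Icc
  have hpointwise : ∀ s ∈ Set.Icc s₁ s₂,
      ‖v lam‖ ^ 2 ≤ 2 * ‖v s‖ ^ 2 + 2 * ((s₂ - s₁) * ∫ u in s₁..s₂, ‖v' u‖ ^ 2) :=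
    fun s hs => sq_norm_le_two_mul_sq_norm_add hv'int hv'2 hs hlam (hftc s hs lam hlam)
  have haverage := setIntegral_ge_of_const_le_real measurableSet_Icc (measure_ne_top ρ _)
    hpointwise ((hv2.const_mul 2).add (integrableOn_const (measure_ne_top ρ _)))
  rw [integral_add (hv2.const_mul 2) (integrableOn_const (measure_ne_top ρ _)),
    MeasureTheory.integral_const_mul, setIntegral_const, smul_eq_mul, measureReal_def] at haverage
  exact le_sqrt_two_mul_max_mul_sqrt_of_sq_mul_le (norm_nonneg _)
    (ENNReal.toReal_pos hρpos.ne' (measure_ne_top ρ _))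
    (setIntegral_nonneg measurableSet_Icc fun _ _ => sq_nonneg _)
    (integral_nonneg hle fun _ _ => sq_nonneg _) haverage

/-- sup bound: `sup_{λ∈[s₁,s₂]} ‖v(λ)‖ ≤ M ‖v‖_{𝕍,ρ}` with
`M = √2 max(1/√|ρ|, √(s₂-s₁))`. -/
theorem stmt4 {V : Type*} [NormedAddCommGroup V] [InnerProductSpace ℝ V] [CompleteSpace V]
    (s₁ s₂ : ℝ) (hs : s₁ < s₂) (ρ : Measure ℝ) [IsFiniteMeasure ρ]
    (hρpos : 0 < ρ (Set.Icc s₁ s₂))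
    (v v' : ℝ → V) (hc : Continuous v)
    (hv'int : IntervalIntegrable v' volume s₁ s₂)
    (hv'2 : IntervalIntegrable (fun s => ‖v' s‖ ^ 2) volume s₁ s₂)
    (hftc : ∀ a ∈ Set.Icc s₁ s₂, ∀ b ∈ Set.Icc s₁ s₂, v b = v a + ∫ s in a..b, v' s)
    (lam : ℝ) (hlam : lam ∈ Set.Icc s₁ s₂) :
    ‖v lam‖ ≤ Real.sqrt 2 * max (1 / Real.sqrt (ρ (Set.Icc s₁ s₂)).toReal) (Real.sqrt (s₂ - s₁)) *
      Real.sqrt ((∫ s in Set.Icc s₁ s₂, ‖v s‖ ^ 2 ∂ρ) + ∫ s in s₁..s₂, ‖v' s‖ ^ 2) :=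
  stmt4_general s₁ s₂ ρ hρpos v v' hc hv'int hv'2 hftc lam hlam
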